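/- arXiv:2208.01776 — 8 statements merged into one kernel-verified Lean document; each statement's English description precedes it below -/
import Mathlib

section
/- Let X be a connected finite graph that is the union of its cycle subgraphs (every vertex and edge lies on some cycle). Then any two vertices of X can be joined by a path of length at most (2/3)(|V(X)| − 1). -/
open SimpleGraph

private lemma aux_dist_getVert_le {V : Type*} {G : SimpleGraph V} (hconn : G.Connected)
    {u v : V} (p : G.Walk u v) (i : ℕ) : G.dist u (p.getVert i) ≤ i := by
  induction p generalizing i with
  | nil => simp [Walk.getVert_of_length_le, dist_self]
  | @cons a b c h q ih =>
    cases i with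
    | zero => simp
    | succ n =>
      rw [Walk.getVert_cons_succ]
      calc G.dist a (q.getVert n) ≤ G.dist a b + G.dist b (q.getVert n) := hconn.dist_triangle
        _ ≤ 1 + n := by
            have h1 : G.dist a b ≤ 1 := (dist_le h.toWalk).trans (by simp [Adj.toWalk])
            have h2 := ih n
            omega
        _ = n + 1 := by omega

private lemma aux_dist_getVert_right_le {V : Type*} {G : SimpleGraph V}
    {u v : V} (p : G.Walk u v) (i : ℕ) : G.dist (p.getVert i) v ≤ p.length - i := by
  induction p generalizing i with
  | nil => simp [Walk.getVert_of_length_le]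
  | @cons a b c h q ih =>
    cases i with
    | zero =>
      simp only [Walk.getVert_zero, Nat.sub_zero]
      exact dist_le (Walk.cons h q)
    | succ n =>
      rw [Walk.getVert_cons_succ]
      have := ih n
      simp only [Walk.length_cons]
      omega

private lemma aux_edge_getVert_mem {V : Type*} {G : SimpleGraph V}
    {u v : V} (p : G.Walk u v) {k : ℕ} (hk : k < p.length) :
    s(p.getVert k, p.getVert (k + 1)) ∈ p.edges := by
  induction p generalizing k with
  | nil => simp at hk
  | @cons a b c h q ih =>
    cases k with
    | zero =>
      simp [Walk.getVert_cons_succ, Walk.edges_cons]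
    | succ n =>
      rw [Walk.getVert_cons_succ, Walk.getVert_cons_succ, Walk.edges_cons]
      right
      exact ih (by simpa using Nat.lt_of_succ_lt_succ hk)

private lemma aux_crossing {f : ℕ → ℕ} {i : ℕ} : ∀ {n : ℕ}, f 0 ≤ i → i < f n →
    ∃ k, k < n ∧ f k ≤ i ∧ i < f (k + 1) := by
  intro n
  induction n with
  | zero => intro h0 hn; omega
  | succ m ih =>
    intro h0 hn
    by_cases hm : f m ≤ i
    · exact ⟨m, Nat.lt_succ_self m, hm, hn⟩
    · obtain ⟨k, hk, h1, h2⟩ := ih h0 (by omega)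
      exact ⟨k, by omega, h1, h2⟩

private lemma aux_sum_bound (c : ℕ → ℕ) : ∀ d : ℕ, (∀ i ≤ d, 1 ≤ c i) →
    (∀ i < d, 3 ≤ c i + c (i + 1)) →
    3 * d + c d + 1 ≤ 2 * ∑ i ∈ Finset.range (d + 1), c i := by
  intro d
  induction d with
  | zero => intro h1 _; have := h1 0 le_rfl; simp; omega
  | succ m ih =>
    intro h1 h3
    have hm := ih (fun i hi => h1 i (by omega)) (fun i hi => h3 i (by omega))
    rw [Finset.sum_range_succ]
    have := h3 m (by omega)
    omega

/-- In a connected finite graph which is the union of its cycle subgraphs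
(every vertex and every edge lies on some cycle), any two vertices are joined
by a path of length at most `(2/3)(|V| - 1)`. -/
theorem stmt3 {V : Type*} [Fintype V] (G : SimpleGraph V) (hconn : G.Connected)
    (hcycV : ∀ v : V, ∃ (u : V) (c : G.Walk u u), c.IsCycle ∧ v ∈ c.support)
    (hcycE : ∀ e ∈ G.edgeSet, ∃ (u : V) (c : G.Walk u u), c.IsCycle ∧ e ∈ c.edges)
    (x y : V) :
    ∃ p : G.Walk x y, p.IsPath ∧ 3 * p.length ≤ 2 * (Fintype.card V - 1) := by
  classical
  obtain ⟨p, hp, hlen⟩ := hconn.exists_path_of_dist x y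
  refine ⟨p, hp, ?_⟩
  rw [hlen]
  set d := G.dist x y with hd
  set L : ℕ → Finset V := fun i => Finset.univ.filter (fun v => G.dist x v = i) with hL
  have hmemL : ∀ v i, v ∈ L i ↔ G.dist x v = i := by
    intro v i; simp [hL]
  have hmem : ∀ i ≤ d, G.dist x (p.getVert i) = i := by
    intro i hi
    have h1 : G.dist x (p.getVert i) ≤ i := aux_dist_getVert_le hconn p i
    have h2 : G.dist (p.getVert i) y ≤ d - i := by
      have := aux_dist_getVert_right_le p i
      rwa [hlen] at this
    have h3 : d ≤ G.dist x (p.getVert i) + G.dist (p.getVert i) y := hconn.dist_triangle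
    omega
  have hone : ∀ i ≤ d, 1 ≤ (L i).card := by
    intro i hi
    exact Finset.card_pos.2 ⟨p.getVert i, (hmemL _ _).2 (hmem i hi)⟩
  -- key step: no two consecutive singleton layers
  have hkey : ∀ i < d, 3 ≤ (L i).card + (L (i + 1)).card := by
    intro i hi
    by_contra hcon
    push_neg at hcon
    have hci : (L i).card = 1 := by
      have := hone i hi.le; have := hone (i + 1) hi; omega
    have hci1 : (L (i + 1)).card = 1 := by
      have := hone i hi.le; have := hone (i + 1) hi; omega
    set u := p.getVert i with hu
    set w := p.getVert (i + 1) with hw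
    have hdu : G.dist x u = i := hmem i hi.le
    have hdw : G.dist x w = i + 1 := hmem (i + 1) hi
    have huw : G.Adj u w := p.adj_getVert_succ (by omega)
    obtain ⟨c0, cyc, hcyc, he⟩ := hcycE s(u, w) ((G.mem_edgeSet).2 huw)
    have hreach : (G \ fromEdgeSet {s(u, w)}).Reachable u w :=
      ((adj_and_reachable_delete_edges_iff_exists_cycle).2 ⟨c0, cyc, hcyc, he⟩).2
    obtain ⟨q, hq⟩ := reachable_delete_edges_iff_exists_walk.1 hreach
    -- find the crossing edge of q between layer i and layer i+1
    obtain ⟨k, hk, hk1, hk2⟩ := aux_crossing (f := fun k => G.dist x (q.getVert k))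
      (i := i) (n := q.length) (by simpa using hdu.le) (by simp [Walk.getVert_length]; omega)
    have hadj : G.Adj (q.getVert k) (q.getVert (k + 1)) := q.adj_getVert_succ hk
    have hstep : G.dist x (q.getVert (k + 1)) ≤ G.dist x (q.getVert k) + 1 := by
      have h1 : G.dist (q.getVert k) (q.getVert (k + 1)) ≤ 1 :=
        (dist_le hadj.toWalk).trans (by simp [Adj.toWalk])
      have h2 : G.dist x (q.getVert (k + 1)) ≤
          G.dist x (q.getVert k) + G.dist (q.getVert k) (q.getVert (k + 1)) :=
        hconn.dist_triangle
      omega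
    have hdk : G.dist x (q.getVert k) = i := by omega
    have hdk1 : G.dist x (q.getVert (k + 1)) = i + 1 := by omega
    have hequ : q.getVert k = u :=
      Finset.card_le_one.1 hci.le _ ((hmemL _ _).2 hdk) _ ((hmemL _ _).2 hdu)
    have heqw : q.getVert (k + 1) = w :=
      Finset.card_le_one.1 hci1.le _ ((hmemL _ _).2 hdk1) _ ((hmemL _ _).2 hdw)
    have : s(u, w) ∈ q.edges := by
      have := aux_edge_getVert_mem q hk
      rwa [hequ, heqw] at this
    exact hq this
  -- counting
  have hdisj : ∀ i ∈ Finset.range (d + 1), ∀ j ∈ Finset.range (d + 1), i ≠ j →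
      Disjoint (L i) (L j) := by
    intro i _ j _ hij
    rw [Finset.disjoint_left]
    intro a hai haj
    rw [hmemL] at hai haj
    omega
  have hsum : ∑ i ∈ Finset.range (d + 1), (L i).card ≤ Fintype.card V := by
    rw [← Finset.card_biUnion hdisj, ← Finset.card_univ]
    exact Finset.card_le_card (Finset.subset_univ _)
  have hbound : 3 * d + (L d).card + 1 ≤ 2 * ∑ i ∈ Finset.range (d + 1), (L i).card :=
    aux_sum_bound (fun i => (L i).card) d hone hkey
  have hcard1 : 1 ≤ Fintype.card V := Fintype.card_pos_iff.2 ⟨x⟩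
  have hcd := hone d le_rfl
  omega
end

section
/- A finite simple graph with n vertices and at least n + 1 edges contains a cycle of length at most ⌈2n/3⌉. -/
/-!
A graph with at least as many edges as vertices is not a forest, so it has a cycle `C₁`; deleting
an edge `ab` of `C₁` leaves at least `n` edges, hence a second cycle `C₂` avoiding `ab`. If `C₁`
and `C₂` share at most one vertex, they have at most `n + 1` vertices together, so one of them has
length at most `(n + 1) / 2`. Otherwise, following `C₁` from `ab` to the first vertex `x` on `C₂`
in one direction and to the first vertex `y ≠ x` on `C₂` in the other gives a path `R` from `y`
to `x` through `ab` meeting `C₂` only at `x` and `y`.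
Then `R` and the two arcs of `C₂` between `x` and `y` are three distinct `x`–`y` paths of total
length `|R| + |C₂| ≤ n + 1`, any two of which contain a cycle no longer than their sum; the three
pairwise sums add up to at most `2(n + 1)`.
-/

open SimpleGraph Finset

theorem Finset.card_add_card_le_card_add_card_inter {α : Type*} [Fintype α] [DecidableEq α]
    (s t : Finset α) : #s + #t ≤ Fintype.card α + #(s ∩ t) := by
  rw [← card_union_add_card_inter]
  exact Nat.add_le_add_right (card_le_univ _) _

namespace SimpleGraph

variable {V : Type*} {G : SimpleGraph V}

theorem IsAcyclic.card_edgeFinset_lt [Fintype V] [Nonempty V] [Fintype G.edgeSet]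
    (hG : G.IsAcyclic) : #G.edgeFinset < Fintype.card V := by
  classical
  obtain ⟨T, hGT, hT⟩ := (⊤ : SimpleGraph V).exists_maximal_isAcyclic_of_le_isAcyclic le_top hG
  have hT : T.IsTree := (connected_top.maximal_le_isAcyclic_iff_isTree hT.1.1).mp hT
  have := card_le_card (edgeFinset_subset_edgeFinset.mpr hGT)
  have := hT.card_edgeFinset
  omega

theorem exists_isCycle_of_card_le_card_edgeFinset [Fintype V] [Nonempty V] [Fintype G.edgeSet]
    (h : Fintype.card V ≤ #G.edgeFinset) : ∃ (v : V) (c : G.Walk v v), c.IsCycle := by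
  by_contra! hG
  exact (IsAcyclic.card_edgeFinset_lt hG).not_ge h

namespace Walk

theorem isCycle_append_comm {u v : V} {p : G.Walk u v} {q : G.Walk v u} :
    (p.append q).IsCycle ↔ (q.append p).IsCycle := by
  simp only [isCycle_def, isTrail_def, edges_append, tail_support_append, ne_eq,
    eq_nil_iff_nil, nil_append_iff, List.nodup_append_comm (l₁ := p.edges),
    List.nodup_append_comm (l₁ := p.support.tail), and_comm (a := p.Nil)]

theorem exists_eq_append_of_first_mem {u v w : V} {p : G.Walk u v} {S : Set V}
    (hw : w ∈ p.support) (hwS : w ∈ S) :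
    ∃ x ∈ S, ∃ (q : G.Walk u x) (r : G.Walk x v),
      p = q.append r ∧ ∀ y ∈ q.support, y ∈ S → y = x := by
  induction p with
  | nil =>
    rw [support_nil, List.mem_singleton] at hw
    exact ⟨_, hw ▸ hwS, nil, nil, rfl, by simp⟩
  | @cons u _ _ h p ih =>
    by_cases hu : u ∈ S
    · exact ⟨u, hu, nil, cons h p, rfl, by simp⟩
    rw [support_cons, List.mem_cons] at hw
    obtain ⟨x, hxS, q, r, rfl, hq⟩ := ih (hw.resolve_left (by rintro rfl; exact hu hwS))
    refine ⟨x, hxS, cons h q, r, rfl, ?_⟩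
    rintro y hy hyS
    rw [support_cons, List.mem_cons] at hy
    exact hy.elim (by rintro rfl; exact absurd hyS hu) (hq y · hyS)

theorem IsCycle.card_support_toFinset [DecidableEq V] {u : V} {c : G.Walk u u} (hc : c.IsCycle) :
    #c.support.toFinset = c.length := by
  rw [← cons_tail_support, List.toFinset_cons,
    insert_eq_of_mem (List.mem_toFinset.mpr (c.end_mem_tail_support hc.not_nil)),
    List.toFinset_card_of_nodup hc.support_nodup, List.length_tail, length_support,
    Nat.add_sub_cancel]

theorem IsPath.card_support_toFinset [DecidableEq V] {u v : V} {p : G.Walk u v} (hp : p.IsPath) :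
    #p.support.toFinset = p.length + 1 := by
  rw [List.toFinset_card_of_nodup hp.support_nodup, length_support]

theorem exists_isCycle_three_mul_length_le {x y z : V} {C : G.Walk z z} (hC : C.IsCycle)
    (hx : x ∈ C.support) (hy : y ∈ C.support) (hxy : x ≠ y) {R : G.Walk y x} (hR : R.IsPath)
    {e : Sym2 V} (heR : e ∈ R.edges) (heC : e ∉ C.edges) :
    ∃ (w : V) (c : G.Walk w w), c.IsCycle ∧ 3 * c.length ≤ 2 * (R.length + C.length) := by
  classical
  set D := C.rotate x hx
  have hD : D.IsCycle := hC.rotate hx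
  have hyD : y ∈ D.support := (mem_support_rotate_iff ..).mpr hy
  have heD : e ∉ D.edges := fun h ↦ heC ((rotate_edges C x hx).mem_iff.mp h)
  set P := D.takeUntil y hyD
  set P' := D.dropUntil y hyD
  have hPP' : P.append P' = D := take_spec D hyD
  have hP : P.IsPath := hD.isPath_takeUntil hyD
  have hP' : P'.IsPath := IsCycle.isPath_of_append_right (not_nil_of_ne hxy) (by rwa [hPP'])
  have hPD : P.edges ⊆ D.edges := edges_takeUntil_subset_edges D hyD
  have hP'D : P'.edges ⊆ D.edges := edges_dropUntil_subset_edges D hyD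
  clear_value P P'
  have hRP : R.reverse ≠ P := by
    intro h
    refine heD (hPD ?_)
    rwa [← h, edges_reverse, List.mem_reverse]
  have hRP' : R.reverse ≠ P'.reverse := by
    intro h
    rw [reverse_injective h] at heR
    exact heD (hP'D heR)
  obtain ⟨_, -, -, c, hc, hcl⟩ := hR.reverse.exists_isCycle_length_le_add_of_ne hP hRP
  obtain ⟨_, -, -, c', hc', hcl'⟩ :=
    hR.reverse.exists_isCycle_length_le_add_of_ne hP'.reverse hRP'
  have hlen : P.length + P'.length = C.length := by
    rw [← length_append, hPP', length_rotate]
  simp only [length_reverse] at hcl hcl'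
  by_cases h : 3 * c.length ≤ 2 * (R.length + C.length)
  · exact ⟨_, c, hc, h⟩
  by_cases h' : 3 * c'.length ≤ 2 * (R.length + C.length)
  · exact ⟨_, c', hc', h'⟩
  exact ⟨z, C, hC, by omega⟩

theorem exists_ear {a b u v : V} {hab : G.Adj a b} {Q : G.Walk b a} (hC : (cons hab Q).IsCycle)
    {S : Set V} (hu : u ∈ (cons hab Q).support) (hv : v ∈ (cons hab Q).support) (huS : u ∈ S)
    (hvS : v ∈ S) (huv : u ≠ v) :
    ∃ x ∈ S, ∃ y ∈ S, x ≠ y ∧ ∃ R : G.Walk y x,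
      R.IsPath ∧ s(a, b) ∈ R.edges ∧ ∀ w ∈ R.support, w ∈ S → w = x ∨ w = y := by
  have hmemQ : ∀ w ∈ (cons hab Q).support, w ∈ Q.support := by
    intro w hw
    rw [support_cons, List.mem_cons] at hw
    exact hw.elim (· ▸ Q.end_mem_support) id
  obtain ⟨x, hxS, Q₁, Q₂, rfl, hQ₁⟩ := exists_eq_append_of_first_mem (hmemQ u hu) huS
  obtain ⟨w, hw, hwS⟩ : ∃ w ∈ Q₂.reverse.support, w ∈ S \ {x} := by
    obtain ⟨w, hw, hwS, hwx⟩ : ∃ w ∈ (cons hab (Q₁.append Q₂)).support, w ∈ S ∧ w ≠ x := by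
      by_cases hux : u = x
      · exact ⟨v, hv, hvS, hux ▸ huv.symm⟩
      · exact ⟨u, hu, huS, hux⟩
    rcases (mem_support_append_iff ..).mp (hmemQ w hw) with hw | hw
    · exact absurd (hQ₁ w hw hwS) hwx
    · exact ⟨w, by rwa [support_reverse, List.mem_reverse], hwS, hwx⟩
  obtain ⟨y, ⟨hyS, hyx : y ≠ x⟩, T₁, T₂, hT, hT₁⟩ := exists_eq_append_of_first_mem hw hwS
  refine ⟨x, hxS, y, hyS, Ne.symm hyx, T₁.reverse.append (cons hab Q₁), ?_, by simp, ?_⟩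
  · -- rotated to start at `x`, the cycle is `T₂.reverse` followed by the ear
    have hQ₂ : Q₂ = T₂.reverse.append T₁.reverse := by
      rw [← reverse_append, ← hT, reverse_reverse]
    have hrot : (T₂.reverse.append (T₁.reverse.append (cons hab Q₁))).IsCycle := by
      rw [append_assoc, ← hQ₂, ← isCycle_append_comm]
      simpa only [cons_append] using hC
    exact hrot.isPath_of_append_right (by simpa using not_nil_of_ne hyx)
  · intro w hw hwS
    rw [mem_support_append_iff, support_reverse, List.mem_reverse, support_cons,
      List.mem_cons] at hw
    rcases hw with hw | rfl | hw
    · by_cases hwx : w = x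
      · exact .inl hwx
      · exact .inr (hT₁ w hw ⟨hwS, hwx⟩)
    · by_cases hwx : w = x
      · exact .inl hwx
      · exact .inr (hT₁ w T₁.start_mem_support ⟨hwS, hwx⟩)
    · exact .inl (hQ₁ w hw hwS)

end Walk

section Counting

variable [Fintype V] [DecidableEq V]

theorem exists_isCycle_two_mul_length_le {u v : V} {c : G.Walk u u} {d : G.Walk v v}
    (hc : c.IsCycle) (hd : d.IsCycle) (hcd : #(c.support.toFinset ∩ d.support.toFinset) ≤ 1) :
    ∃ (w : V) (c' : G.Walk w w), c'.IsCycle ∧ 2 * c'.length ≤ Fintype.card V + 1 := by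
  have := card_add_card_le_card_add_card_inter c.support.toFinset d.support.toFinset
  rw [hc.card_support_toFinset, hd.card_support_toFinset] at this
  by_cases h : c.length ≤ d.length
  · exact ⟨u, c, hc, by omega⟩
  · exact ⟨v, d, hd, by omega⟩

theorem exists_isCycle_three_mul_length_le_of_ear {x y z : V} {C : G.Walk z z} (hC : C.IsCycle)
    (hx : x ∈ C.support) (hy : y ∈ C.support) (hxy : x ≠ y) {R : G.Walk y x} (hR : R.IsPath)
    (hRC : ∀ w ∈ R.support, w ∈ C.support → w = x ∨ w = y)
    {e : Sym2 V} (heR : e ∈ R.edges) (heC : e ∉ C.edges) :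
    ∃ (w : V) (c : G.Walk w w), c.IsCycle ∧ 3 * c.length ≤ 2 * Fintype.card V + 2 := by
  obtain ⟨w, c, hc, hlen⟩ := Walk.exists_isCycle_three_mul_length_le hC hx hy hxy hR heR heC
  have hinter : R.support.toFinset ∩ C.support.toFinset ⊆ {x, y} := by
    intro w hw
    simp only [mem_inter, List.mem_toFinset] at hw
    simpa using hRC w hw.1 hw.2
  have := card_add_card_le_card_add_card_inter R.support.toFinset C.support.toFinset
  rw [hR.card_support_toFinset, hC.card_support_toFinset] at this
  have := (card_le_card hinter).trans card_le_two
  exact ⟨w, c, hc, by omega⟩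

end Counting

theorem exists_isCycle_cons_and_isCycle_not_mem_edges [Fintype V] [Fintype G.edgeSet]
    (h : Fintype.card V + 1 ≤ #G.edgeFinset) :
    ∃ (a b : V) (hab : G.Adj a b) (Q : G.Walk b a) (z : V) (C : G.Walk z z),
      (Walk.cons hab Q).IsCycle ∧ C.IsCycle ∧ s(a, b) ∉ C.edges := by
  obtain ⟨e, -⟩ := card_pos.mp (by omega : 0 < #G.edgeFinset)
  have : Nonempty V := ⟨e.out.1⟩
  obtain ⟨a, C₁, hC₁⟩ := exists_isCycle_of_card_le_card_edgeFinset (G := G) (by omega)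
  cases C₁ with
  | nil => exact absurd hC₁ Walk.not_isCycle_nil
  | @cons _ b _ hab Q =>
    classical
    have : Fintype.card V ≤ #(G.deleteEdges ({s(a, b)} : Finset (Sym2 V))).edgeFinset := by
      rw [edgeFinset_deleteEdges,
        card_sdiff_of_subset (singleton_subset_iff.mpr (G.mem_edgeFinset.mpr hab)), card_singleton]
      omega
    obtain ⟨z, C, hC⟩ := exists_isCycle_of_card_le_card_edgeFinset this
    refine ⟨a, b, hab, Q, z, C.mapLe (G.deleteEdges_le _), hC₁, hC.mapLe _, ?_⟩
    rw [Walk.edges_mapLe_eq_edges]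
    intro he
    simpa using C.edges_subset_edgeSet he

end SimpleGraph

/-- A finite simple graph with `n` vertices and at least `n + 1` edges contains a
cycle of length at most `⌈2n/3⌉` (which equals `(2n + 2) / 3` in natural division). -/
theorem stmt4 {V : Type*} [Fintype V] [DecidableEq V] (G : SimpleGraph V)
    [DecidableRel G.Adj]
    (h : Fintype.card V + 1 ≤ G.edgeFinset.card) :
    ∃ (v : V) (c : G.Walk v v), c.IsCycle ∧ c.length ≤ (2 * Fintype.card V + 2) / 3 := by
  obtain ⟨a, b, hab, Q, z, C, hC₁, hC, habC⟩ := exists_isCycle_cons_and_isCycle_not_mem_edges h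
  suffices ∃ (v : V) (c : G.Walk v v), c.IsCycle ∧ 3 * c.length ≤ 2 * Fintype.card V + 2 by
    obtain ⟨v, c, hc, hlen⟩ := this
    exact ⟨v, c, hc, by omega⟩
  by_cases hmeet : #((Walk.cons hab Q).support.toFinset ∩ C.support.toFinset) ≤ 1
  · obtain ⟨v, c, hc, hlen⟩ := exists_isCycle_two_mul_length_le hC₁ hC hmeet
    exact ⟨v, c, hc, by omega⟩
  · obtain ⟨u, hu, v, hv, huv⟩ := one_lt_card.mp (not_le.mp hmeet)
    simp only [mem_inter, List.mem_toFinset] at hu hv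
    obtain ⟨x, hx, y, hy, hxy, R, hR, habR, hRC⟩ :=
      Walk.exists_ear hC₁ (S := {w | w ∈ C.support}) hu.1 hv.1 hu.2 hv.2 huv
    exact exists_isCycle_three_mul_length_le_of_ear hC hx hy hxy hR hRC habR habC
end

section
/- Let (X,w) be a weighted graph (weight function satisfying w(X(1)) totals as in the weight axioms, in particular 2w(v) = ∑_{e ∋ v} w(e) for each vertex v and ∑_{e ∈ X(1)} w(e) = 1). Let t = max{ w(e)/w(v) : v a vertex, e an edge containing v }. If T is a subgraph of X with total edge weight w(T(1)) ≥ t, then T contains a cycle. -/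
open SimpleGraph Finset

/-!
If `T` were a forest, root each of its components and send every edge to its endpoint farther
from the root. In a forest a vertex has at most one neighbour closer to the root, so this map is
injective, and it misses the root `r` of one component. Hence
`w(T) = ∑ w(e) ≤ t ∑_{v ≠ r} w(v) = t (1 - w(r)) < t`, where the vertex weights sum to `1`
by counting darts in two ways.
-/

namespace SimpleGraph

variable {V : Type*} {G : SimpleGraph V}

theorem IsAcyclic.eq_penultimate_of_dist_add_one (hG : G.IsAcyclic) {r v u : V}
    {q : G.Walk r v} (hq : q.IsPath) (hq_len : q.length = G.dist r v) (hadj : G.Adj v u)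
    (hdist : G.dist r u + 1 = G.dist r v) : u = q.penultimate := by
  refine hG.eq_penultimate_of_adj_end hq hadj ?_
  by_contra hu
  obtain ⟨q', hq', hq'_len⟩ := (q.reachable.trans hadj.reachable).exists_path_of_dist
  have hv : v ∈ q'.support := by
    by_contra hv
    exact hu (hG.mem_support_of_ne_mem_support_of_adj_of_isPath hq hq' hadj hv)
  have := congrArg Walk.length (hG.path_concat hq hq' hadj hv)
  rw [Walk.length_concat] at this
  omega

theorem IsAcyclic.eq_of_adj_of_dist_add_one (hG : G.IsAcyclic) {r v u₁ u₂ : V}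
    (hr : G.Reachable r v) (h₁ : G.Adj v u₁) (h₂ : G.Adj v u₂)
    (hd₁ : G.dist r u₁ + 1 = G.dist r v) (hd₂ : G.dist r u₂ + 1 = G.dist r v) : u₁ = u₂ := by
  obtain ⟨q, hq, hq_len⟩ := hr.exists_path_of_dist
  rw [hG.eq_penultimate_of_dist_add_one hq hq_len h₁ hd₁,
    hG.eq_penultimate_of_dist_add_one hq hq_len h₂ hd₂]

theorem IsAcyclic.exists_injOn_edgeSet_mem_ne (hG : G.IsAcyclic) (r : V) :
    ∃ f : Sym2 V → V, (∀ e ∈ G.edgeSet, f e ∈ e) ∧ G.edgeSet.InjOn f ∧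
      ∀ e ∈ G.edgeSet, f e ≠ r := by
  classical
  let root : G.ConnectedComponent → V := fun c =>
    if G.connectedComponentMk r = c then r else c.out
  have root_mem : ∀ c, G.connectedComponentMk (root c) = c := by
    intro c
    by_cases hc : G.connectedComponentMk r = c
    · simp only [root, hc, if_true]
    · simp only [root, if_neg hc]
      exact c.out_eq
  have root_r : root (G.connectedComponentMk r) = r := if_pos rfl
  let height : V → ℕ := fun v => G.dist (root (G.connectedComponentMk v)) v
  have reach : ∀ v, G.Reachable (root (G.connectedComponentMk v)) v := fun v =>
    ConnectedComponent.eq.1 (root_mem _)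
  have height_adj : ∀ {a b}, G.Adj a b →
      height a = height b + 1 ∨ height b = height a + 1 := by
    intro a b hab
    have hc : G.connectedComponentMk a = G.connectedComponentMk b :=
      ConnectedComponent.eq.2 hab.reachable
    simp only [height, ← hc]
    exact hG.dist_eq_dist_add_one_of_adj_of_reachable _ hab (reach a)
  have parent_unique : ∀ {v u₁ u₂}, G.Adj v u₁ → G.Adj v u₂ →
      height u₁ + 1 = height v → height u₂ + 1 = height v → u₁ = u₂ := by
    intro v u₁ u₂ h₁ h₂ hd₁ hd₂
    simp only [height, ← ConnectedComponent.eq.2 h₁.reachable,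
      ← ConnectedComponent.eq.2 h₂.reachable] at hd₁ hd₂
    exact hG.eq_of_adj_of_dist_add_one (reach v) h₁ h₂ hd₁ hd₂
  have child : ∀ e ∈ G.edgeSet,
      ∃ v u, e = s(v, u) ∧ G.Adj v u ∧ height u + 1 = height v := by
    intro e he
    induction e with
    | _ a b =>
      rcases height_adj he with h | h
      · exact ⟨a, b, rfl, he, h.symm⟩
      · exact ⟨b, a, Sym2.eq_swap, he.symm, h.symm⟩
  have : Nonempty V := ⟨r⟩
  choose! f g hfg hadj hheight using child
  refine ⟨f, fun e he => by nth_rewrite 1 [hfg e he]; exact Sym2.mem_mk_left _ _, ?_, ?_⟩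
  · intro e₁ he₁ e₂ he₂ heq
    rw [hfg e₁ he₁, hfg e₂ he₂, heq, parent_unique (hadj e₁ he₁) (heq ▸ hadj e₂ he₂)
      (hheight e₁ he₁) (heq ▸ hheight e₂ he₂)]
  · intro e he hr
    have := hheight e he
    simp only [height, hr, root_r, SimpleGraph.dist_self] at this
    omega

theorem IsAcyclic.sum_edgeFinset_le_mul_sum_sub [Fintype V] [Fintype G.edgeSet] (hG : G.IsAcyclic)
    {wE : Sym2 V → ℝ} {wV : V → ℝ} {t : ℝ} (ht_nonneg : 0 ≤ t) (hwV : ∀ v, 0 ≤ wV v)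
    (ht : ∀ v, ∀ e ∈ G.edgeSet, v ∈ e → wE e ≤ t * wV v) (r : V) :
    ∑ e ∈ G.edgeFinset, wE e ≤ t * (∑ v, wV v - wV r) := by
  classical
  obtain ⟨f, hf_mem, hf_inj, hf_ne⟩ := hG.exists_injOn_edgeSet_mem_ne r
  have hf_inj' : Set.InjOn f G.edgeFinset := by rwa [coe_edgeFinset]
  calc ∑ e ∈ G.edgeFinset, wE e
      ≤ ∑ e ∈ G.edgeFinset, t * wV (f e) := sum_le_sum fun e he =>
        ht _ e (mem_edgeFinset.1 he) (hf_mem e (mem_edgeFinset.1 he))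
    _ = t * ∑ v ∈ G.edgeFinset.image f, wV v := by rw [sum_image hf_inj', mul_sum]
    _ ≤ t * ∑ v ∈ univ.erase r, wV v := by
        refine mul_le_mul_of_nonneg_left (sum_le_sum_of_subset_of_nonneg ?_ fun v _ _ => hwV v)
          ht_nonneg
        intro v hv
        obtain ⟨e, he, rfl⟩ := mem_image.1 hv
        exact mem_erase.2 ⟨hf_ne e (mem_edgeFinset.1 he), mem_univ _⟩
    _ = t * (∑ v, wV v - wV r) := by rw [sum_erase_eq_sub (mem_univ r)]

theorem sum_sum_neighborFinset_eq_two_nsmul_sum_edgeFinset [Fintype V] [DecidableRel G.Adj]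
    {M : Type*} [AddCommMonoid M] (f : Sym2 V → M) :
    ∑ v, ∑ u ∈ G.neighborFinset v, f s(v, u) = 2 • ∑ e ∈ G.edgeFinset, f e := by
  classical
  have by_fst : ∑ d : G.Dart, f d.edge = ∑ v, ∑ u ∈ G.neighborFinset v, f s(v, u) := by
    rw [← sum_fiberwise_of_maps_to (fun d _ => mem_univ d.fst)]
    refine sum_congr rfl fun v _ => ?_
    rw [show ({d : G.Dart | d.fst = v} : Finset _) = _ from G.dart_fst_fiber v,
      sum_image fun _ _ _ _ h => G.dartOfNeighborSet_injective v h]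
    exact (sum_subtype _ (fun u => mem_neighborFinset G v u) fun u => f s(v, u)).symm
  have by_edge : ∑ d : G.Dart, f d.edge = 2 • ∑ e ∈ G.edgeFinset, f e := by
    rw [← sum_fiberwise_of_maps_to fun d _ => mem_edgeFinset.2 d.edge_mem, smul_sum]
    refine sum_congr rfl fun e he => ?_
    rw [sum_congr rfl fun d hd => congrArg f (mem_filter.1 hd).2, sum_const,
      G.dart_edge_fiber_card e (mem_edgeFinset.1 he)]
  rw [← by_fst, by_edge]

theorem Subgraph.exists_isCycle_toSubgraph_le_of_not_isAcyclic {T : G.Subgraph}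
    (hT : ¬T.spanningCoe.IsAcyclic) :
    ∃ (v : V) (c : G.Walk v v), c.IsCycle ∧ c.toSubgraph ≤ T := by
  simp only [IsAcyclic, not_forall, not_not] at hT
  obtain ⟨v, c, hc⟩ := hT
  refine ⟨v, c.mapLe T.spanningCoe_le, hc.mapLe _, ?_⟩
  rw [Walk.toSubgraph_le_iff (hc.mapLe _).not_nil, Walk.edgeSet_mapLe_eq_edgeSet,
    ← Subgraph.edgeSet_spanningCoe]
  exact fun e he => c.edges_subset_edgeSet he

end SimpleGraph

theorem stmt5_general {V : Type*} [Fintype V] (G : SimpleGraph V) [DecidableRel G.Adj]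
    (wE : Sym2 V → ℝ) (wV : V → ℝ) (t : ℝ)
    (hVpos : ∀ v : V, 0 < wV v)
    (hsum : ∑ e ∈ G.edgeFinset, wE e = 1)
    (hvert : ∀ v : V, 2 * wV v = ∑ u ∈ G.neighborFinset v, wE s(v, u))
    (ht : ∀ (v : V) (e : Sym2 V), e ∈ G.edgeSet → v ∈ e → wE e ≤ t * wV v)
    (T : G.Subgraph)
    (hT : t ≤ ∑ e ∈ (Set.toFinite T.edgeSet).toFinset, wE e) :
    ∃ (v : V) (c : G.Walk v v), c.IsCycle ∧ c.toSubgraph ≤ T := by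
  refine T.exists_isCycle_toSubgraph_le_of_not_isAcyclic fun hT_acyclic => ?_
  obtain ⟨e, he, hwe⟩ : ∃ e ∈ G.edgeFinset, 0 < wE e :=
    exists_lt_of_sum_lt (by rw [hsum, sum_const_zero]; exact one_pos)
  obtain ⟨r, hr⟩ : ∃ r, r ∈ e := ⟨_, e.out_fst_mem⟩
  have ht_pos : 0 < t := pos_of_mul_pos_left (hwe.trans_le (ht r e (mem_edgeFinset.1 he) hr))
    (hVpos r).le
  have hwV_total : ∑ v, wV v = 1 := by
    have := G.sum_sum_neighborFinset_eq_two_nsmul_sum_edgeFinset wE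
    simp only [← hvert, ← mul_sum, hsum, two_nsmul] at this
    linarith
  have : Fintype T.spanningCoe.edgeSet := (Set.toFinite _).fintype
  have hT_edges : T.spanningCoe.edgeFinset = (Set.toFinite T.edgeSet).toFinset := by
    ext e; simp [Subgraph.edgeSet_spanningCoe]
  have hforest := hT_acyclic.sum_edgeFinset_le_mul_sum_sub ht_pos.le (fun v => (hVpos v).le)
    (fun v e he => ht v e (edgeSet_mono T.spanningCoe_le he)) r
  rw [hT_edges, hwV_total] at hforest
  nlinarith [mul_pos ht_pos (hVpos r)]

/-- In a weighted graph `(X, w)` (edge weights summing to `1`, each vertex weight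
being half the sum of the weights of incident edges), if `t` bounds all ratios
`w(e)/w(v)` for `v ∈ e`, then any subgraph whose total edge weight is at least `t`
contains a cycle. -/
theorem stmt5 {V : Type*} [Fintype V] (G : SimpleGraph V) [DecidableRel G.Adj]
    (wE : Sym2 V → ℝ) (wV : V → ℝ) (t : ℝ)
    (hEpos : ∀ e ∈ G.edgeSet, 0 < wE e) (hVpos : ∀ v : V, 0 < wV v)
    (hsum : ∑ e ∈ G.edgeFinset, wE e = 1)
    (hvert : ∀ v : V, 2 * wV v = ∑ u ∈ G.neighborFinset v, wE s(v, u))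
    (ht : ∀ (v : V) (e : Sym2 V), e ∈ G.edgeSet → v ∈ e → wE e ≤ t * wV v)
    (T : G.Subgraph)
    (hT : t ≤ ∑ e ∈ (Set.toFinite T.edgeSet).toFinset, wE e) :
    ∃ (v : V) (c : G.Walk v v), c.IsCycle ∧ c.toSubgraph ≤ T :=
  stmt5_general G wE wV t hVpos hsum hvert ht T hT
end

section
/- (Weighted Expander Mixing Lemma) Let (X,w) be a weighted graph whose adjacency operator 𝒜 has all eigenvalues on the orthogonal complement of the constant function contained in [μ, λ]. For vertex subsets A, B with α = w(A), β = w(B): (i) |(1/2)w(E_ord(A,B)) − αβ| ≤ max{|λ|,|μ|}·√(αβ(1−α)(1−β)); and (ii) μ·α(1−α) ≤ w(E(A)) − α² ≤ λ·α(1−α), where E(A) is the set of edges with both endpoints in A. -/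
/-!
Write `⟨f, g⟩ = ∑ w(x) f(x) g(x)` and `1_A` for the indicator of `A`. The centered indicators
`f_A = 1_A - w(A)` are orthogonal to the constants, with `⟨f_A, f_A⟩ = α(1 - α)` and
`⟨𝒜 f_A, f_B⟩ = ½ w(E_ord(A, B)) - αβ`. Part (ii) is the spectral hypothesis applied to `f_A`.
For part (i), with `M = max{|λ|, |μ|}` the forms `M⟨·,·⟩ ∓ ⟨𝒜·,·⟩` are positive semidefinite on
the complement of the constants; Cauchy–Schwarz for each of them, combined through their sum
`2M⟨·,·⟩` and difference `2⟨𝒜·,·⟩`, gives `⟨𝒜 f, g⟩² ≤ M² ⟨f, f⟩ ⟨g, g⟩`.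
-/

open SimpleGraph Finset

/-- The weighted adjacency operator of a weighted graph. -/
noncomputable def adjOp {V : Type*} [Fintype V] (G : SimpleGraph V) [DecidableRel G.Adj]
    (wE : Sym2 V → ℝ) (wV : V → ℝ) (f : V → ℝ) : V → ℝ :=
  fun x => ∑ y ∈ G.neighborFinset x, wE s(x, y) / (2 * wV x) * f y

theorem sub_sq_le_add_mul_add {p q a b c d : ℝ} (hp : p ^ 2 ≤ a * b) (hq : q ^ 2 ≤ c * d)
    (ha : 0 ≤ a) (hb : 0 ≤ b) (hc : 0 ≤ c) (hd : 0 ≤ d) :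
    (q - p) ^ 2 ≤ (a + c) * (b + d) := by
  have hpq : (p * q) ^ 2 ≤ (a * d) * (b * c) := by
    rw [mul_pow]
    nlinarith [sq_nonneg p, sq_nonneg q, mul_nonneg ha hb, mul_nonneg hc hd]
  have h2pq : 2 * |p * q| ≤ a * d + b * c := by
    nlinarith [sq_nonneg (a * d - b * c), abs_nonneg (p * q), sq_abs (p * q),
      mul_nonneg ha hd, mul_nonneg hb hc]
  nlinarith [neg_abs_le (p * q)]

theorem abs_le_max_abs_mul_of_le_of_le {μ lam n b : ℝ} (hn : 0 ≤ n) (hμ : μ * n ≤ b)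
    (hlam : b ≤ lam * n) : |b| ≤ max |lam| |μ| * n := by
  rw [abs_le]
  constructor <;> nlinarith [le_abs_self lam, neg_abs_le μ, le_max_left |lam| |μ|,
    le_max_right |lam| |μ|]

theorem LinearMap.BilinForm.apply_sq_le_of_forall_abs_apply_self_le {E : Type*}
    [AddCommGroup E] [Module ℝ E] {B N : LinearMap.BilinForm ℝ E} (hB : B.IsSymm)
    (hN : N.IsSymm) {M : ℝ} (h : ∀ x, |B x x| ≤ M * N x x) (x y : E) :
    B x y ^ 2 ≤ M ^ 2 * (N x x * N y y) := by
  have hP : ∀ z, 0 ≤ (M • N - B) z z := fun z => by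
    simpa using (abs_le.1 (h z)).2
  have hQ : ∀ z, 0 ≤ (M • N + B) z z := fun z => by
    simpa [neg_le_iff_add_nonneg'] using (abs_le.1 (h z)).1
  have csP := apply_sq_le_of_symm _ hP (isSymm_iff.1 ((hN.smul M).sub hB)) x y
  have csQ := apply_sq_le_of_symm _ hQ (isSymm_iff.1 ((hN.smul M).add hB)) x y
  simp only [sub_apply, add_apply, smul_apply, smul_eq_mul] at csP csQ
  nlinarith [sub_sq_le_add_mul_add csP csQ (hP x) (hP y) (hQ x) (hQ y)]

theorem Finset.sum_indicator_one_mul {ι R : Type*} [DecidableEq ι] [NonAssocSemiring R]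
    (s t : Finset ι) (h : ι → R) :
    ∑ x ∈ s, (t : Set ι).indicator 1 x * h x = ∑ x ∈ s ∩ t, h x := by
  simp [Set.indicator_apply, sum_ite_mem]

section WeightedFunctions

variable {V : Type*} [Fintype V] (wV : V → ℝ)

noncomputable def weightedInner : LinearMap.BilinForm ℝ (V → ℝ) :=
  LinearMap.mk₂ ℝ (fun f g => ∑ x, wV x * f x * g x)
    (fun _ _ _ => by simp only [Pi.add_apply, mul_add, add_mul, sum_add_distrib])
    (fun _ _ _ => by simp only [Pi.smul_apply, smul_eq_mul, mul_sum, mul_left_comm, mul_assoc])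
    (fun _ _ _ => by simp only [Pi.add_apply, mul_add, sum_add_distrib])
    (fun _ _ _ => by simp only [Pi.smul_apply, smul_eq_mul, mul_sum, mul_left_comm, mul_assoc])

theorem weightedInner_apply (f g : V → ℝ) :
    weightedInner wV f g = ∑ x, wV x * f x * g x := rfl

theorem weightedInner_isSymm : (weightedInner wV).IsSymm :=
  ⟨fun f g => by simp only [weightedInner_apply, mul_right_comm _ (f _)]⟩

theorem weightedInner_one_one : weightedInner wV 1 1 = ∑ v, wV v := by
  simp only [weightedInner_apply, Pi.one_apply, mul_one]

theorem weightedInner_indicator_left (A : Finset V) (g : V → ℝ) :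
    weightedInner wV ((A : Set V).indicator 1) g = ∑ x ∈ A, wV x * g x := by
  classical
  calc weightedInner wV ((A : Set V).indicator 1) g
      = ∑ x, (A : Set V).indicator 1 x * (wV x * g x) := by
        rw [weightedInner_apply]
        exact sum_congr rfl fun x _ => by ring
    _ = ∑ x ∈ A, wV x * g x := by rw [sum_indicator_one_mul, univ_inter]

noncomputable def centeredIndicator (A : Finset V) : V → ℝ :=
  (A : Set V).indicator 1 - (∑ v ∈ A, wV v) • 1

variable {wV}

theorem weightedInner_self_nonneg (hw : ∀ v, 0 ≤ wV v) (f : V → ℝ) :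
    0 ≤ weightedInner wV f f :=
  sum_nonneg fun x _ => by rw [mul_assoc]; exact mul_nonneg (hw x) (mul_self_nonneg _)

theorem weightedInner_one_centeredIndicator (htot : ∑ v, wV v = 1) (A : Finset V) :
    weightedInner wV 1 (centeredIndicator wV A) = 0 := by
  rw [(weightedInner_isSymm wV).eq]
  simp only [centeredIndicator, map_sub, map_smul, LinearMap.sub_apply, LinearMap.smul_apply,
    smul_eq_mul, weightedInner_indicator_left, weightedInner_one_one, htot, Pi.one_apply,
    mul_one, sub_self]

theorem weightedInner_centeredIndicator_self (htot : ∑ v, wV v = 1) (A : Finset V) :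
    weightedInner wV (centeredIndicator wV A) (centeredIndicator wV A) =
      (∑ v ∈ A, wV v) * (1 - ∑ v ∈ A, wV v) := by
  have hsymm := (weightedInner_isSymm wV).eq 1 ((A : Set V).indicator 1)
  have hself : ∑ x ∈ A, wV x * (A : Set V).indicator 1 x = ∑ x ∈ A, wV x :=
    sum_congr rfl fun x hx => by rw [Set.indicator_of_mem (mem_coe.2 hx), Pi.one_apply, mul_one]
  simp only [centeredIndicator, map_sub, map_smul, LinearMap.sub_apply, LinearMap.smul_apply,
    smul_eq_mul, weightedInner_indicator_left, weightedInner_one_one, htot, Pi.one_apply,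
    mul_one, hself] at hsymm ⊢
  rw [hsymm]
  ring

end WeightedFunctions

section WeightedGraph

variable {V : Type*} [Fintype V] (G : SimpleGraph V) [DecidableRel G.Adj] (wE : Sym2 V → ℝ)
  {wV : V → ℝ}

theorem SimpleGraph.sum_sum_neighborFinset_eq_two_nsmul_sum_edgeFinset_s9 {M : Type*}
    [AddCommMonoid M] (F : Sym2 V → M) :
    ∑ x, ∑ y ∈ G.neighborFinset x, F s(x, y) = 2 • ∑ e ∈ G.edgeFinset, F e := by
  classical
  have byFst : ∑ d : G.Dart, F d.edge = ∑ x, ∑ y ∈ G.neighborFinset x, F s(x, y) := by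
    rw [← sum_fiberwise univ (fun d : G.Dart => d.fst)]
    refine sum_congr rfl fun v _ => ?_
    rw [G.dart_fst_fiber v, sum_image fun _ _ _ _ h => G.dartOfNeighborSet_injective v h,
      neighborFinset_def, ← sum_set_coe]
    rfl
  have byEdge : ∑ d : G.Dart, F d.edge = 2 • ∑ e ∈ G.edgeFinset, F e := by
    rw [← sum_fiberwise_of_maps_to (g := Dart.edge) fun d _ => mem_edgeFinset.2 d.edge_mem,
      smul_sum]
    refine sum_congr rfl fun e he => ?_
    rw [sum_congr rfl fun d hd => congrArg F (mem_filter.1 hd).2, sum_const,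
      G.dart_edge_fiber_card e (mem_edgeFinset.1 he)]
  rw [← byFst, byEdge]

theorem sum_weight_eq_one (hsum : ∑ e ∈ G.edgeFinset, wE e = 1)
    (hvert : ∀ v, 2 * wV v = ∑ u ∈ G.neighborFinset v, wE s(v, u)) :
    ∑ v, wV v = 1 := by
  have h := G.sum_sum_neighborFinset_eq_two_nsmul_sum_edgeFinset_s9 wE
  simp only [← hvert, ← mul_sum, hsum, nsmul_eq_mul, Nat.cast_ofNat] at h
  linarith

/-- The form `(f, g) ↦ ⟨𝒜 g, f⟩`, in which the vertex weights cancel. -/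
noncomputable def adjForm : LinearMap.BilinForm ℝ (V → ℝ) :=
  LinearMap.mk₂ ℝ (fun f g => ∑ x, ∑ y ∈ G.neighborFinset x, wE s(x, y) / 2 * f x * g y)
    (fun _ _ _ => by simp only [Pi.add_apply, mul_add, add_mul, sum_add_distrib])
    (fun _ _ _ => by simp only [Pi.smul_apply, smul_eq_mul, mul_sum, mul_left_comm, mul_assoc])
    (fun _ _ _ => by simp only [Pi.add_apply, mul_add, sum_add_distrib])
    (fun _ _ _ => by simp only [Pi.smul_apply, smul_eq_mul, mul_sum, mul_left_comm, mul_assoc])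

theorem adjForm_apply (f g : V → ℝ) :
    adjForm G wE f g = ∑ x, ∑ y ∈ G.neighborFinset x, wE s(x, y) / 2 * f x * g y := rfl

theorem adjForm_isSymm : (adjForm G wE).IsSymm := by
  refine ⟨fun f g => ?_⟩
  simp only [adjForm_apply, neighborFinset_eq_filter, sum_filter]
  rw [sum_comm]
  refine sum_congr rfl fun x _ => sum_congr rfl fun y _ => ?_
  simp only [G.adj_comm x y, Sym2.eq_swap, mul_right_comm _ (f y)]

theorem sum_mul_adjOp_mul (hw : ∀ v, wV v ≠ 0) (f g : V → ℝ) :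
    ∑ x, wV x * adjOp G wE wV f x * g x = adjForm G wE g f := by
  simp only [adjForm_apply, adjOp, mul_sum, sum_mul]
  refine sum_congr rfl fun x _ => sum_congr rfl fun y _ => ?_
  field_simp [hw x]

theorem adjForm_apply_one (hvert : ∀ v, 2 * wV v = ∑ u ∈ G.neighborFinset v, wE s(v, u))
    (f : V → ℝ) : adjForm G wE f 1 = weightedInner wV f 1 := by
  simp only [adjForm_apply, weightedInner_apply, Pi.one_apply, mul_one]
  refine sum_congr rfl fun x _ => ?_
  rw [← sum_mul, ← sum_div, ← hvert x]
  ring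

theorem adjForm_indicator_indicator (A B : Finset V) :
    adjForm G wE ((A : Set V).indicator 1) ((B : Set V).indicator 1) =
      (1 / 2) * ∑ u ∈ A, ∑ v ∈ B.filter (G.Adj u), wE s(u, v) := by
  classical
  have hfilter : ∀ u, G.neighborFinset u ∩ B = B.filter (G.Adj u) := fun u => by
    rw [inter_comm, ← filter_mem_eq_inter]
    simp only [mem_neighborFinset]
  calc adjForm G wE ((A : Set V).indicator 1) ((B : Set V).indicator 1)
      = (1 / 2) * ∑ x, (A : Set V).indicator 1 x *
          ∑ y ∈ G.neighborFinset x, (B : Set V).indicator 1 y * wE s(x, y) := by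
        simp only [adjForm_apply, mul_sum]
        exact sum_congr rfl fun x _ => sum_congr rfl fun y _ => by ring
    _ = (1 / 2) * ∑ u ∈ A, ∑ v ∈ B.filter (G.Adj u), wE s(u, v) := by
        rw [sum_indicator_one_mul, univ_inter]
        simp only [sum_indicator_one_mul, hfilter]

theorem adjForm_centeredIndicator (hsum : ∑ e ∈ G.edgeFinset, wE e = 1)
    (hvert : ∀ v, 2 * wV v = ∑ u ∈ G.neighborFinset v, wE s(v, u)) (A B : Finset V) :
    adjForm G wE (centeredIndicator wV A) (centeredIndicator wV B) =
      (1 / 2) * (∑ u ∈ A, ∑ v ∈ B.filter (G.Adj u), wE s(u, v)) -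
        (∑ v ∈ A, wV v) * (∑ v ∈ B, wV v) := by
  have hsymm := (adjForm_isSymm G wE).eq 1 ((B : Set V).indicator 1)
  simp only [centeredIndicator, map_sub, map_smul, LinearMap.sub_apply, LinearMap.smul_apply,
    smul_eq_mul, adjForm_apply_one G wE hvert, weightedInner_indicator_left,
    weightedInner_one_one, sum_weight_eq_one G wE hsum hvert, Pi.one_apply, mul_one,
    adjForm_indicator_indicator] at hsymm ⊢
  rw [hsymm]
  ring

end WeightedGraph

theorem stmt9_general {V : Type*} [Fintype V] (G : SimpleGraph V)
    [DecidableRel G.Adj]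
    (wE : Sym2 V → ℝ) (wV : V → ℝ)
    (hVpos : ∀ v : V, 0 < wV v)
    (hsum : ∑ e ∈ G.edgeFinset, wE e = 1)
    (hvert : ∀ v : V, 2 * wV v = ∑ u ∈ G.neighborFinset v, wE s(v, u))
    (μ lam : ℝ)
    (hspec : ∀ f : V → ℝ, (∑ x, wV x * f x = 0) →
      μ * (∑ x, wV x * f x * f x) ≤ ∑ x, wV x * adjOp G wE wV f x * f x ∧
      ∑ x, wV x * adjOp G wE wV f x * f x ≤ lam * (∑ x, wV x * f x * f x))
    (A B : Finset V) :
    |(1 / 2) * (∑ u ∈ A, ∑ v ∈ B.filter (G.Adj u), wE s(u, v)) -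
        (∑ v ∈ A, wV v) * (∑ v ∈ B, wV v)|
      ≤ max |lam| |μ| *
        Real.sqrt ((∑ v ∈ A, wV v) * (∑ v ∈ B, wV v) *
          (1 - ∑ v ∈ A, wV v) * (1 - ∑ v ∈ B, wV v)) ∧
    μ * (∑ v ∈ A, wV v) * (1 - ∑ v ∈ A, wV v)
      ≤ (1 / 2) * (∑ u ∈ A, ∑ v ∈ A.filter (G.Adj u), wE s(u, v)) -
        (∑ v ∈ A, wV v) ^ 2 ∧
    (1 / 2) * (∑ u ∈ A, ∑ v ∈ A.filter (G.Adj u), wE s(u, v)) -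
        (∑ v ∈ A, wV v) ^ 2
      ≤ lam * (∑ v ∈ A, wV v) * (1 - ∑ v ∈ A, wV v) := by
  have htot := sum_weight_eq_one G wE hsum hvert
  set S := LinearMap.ker (weightedInner wV 1)
  have hcenter (C : Finset V) : centeredIndicator wV C ∈ S :=
    weightedInner_one_centeredIndicator htot C
  have hbounds (f : V → ℝ) (hf : f ∈ S) : μ * weightedInner wV f f ≤ adjForm G wE f f ∧
      adjForm G wE f f ≤ lam * weightedInner wV f f := by
    simpa only [sum_mul_adjOp_mul G wE fun v => (hVpos v).ne', weightedInner_apply] using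
      hspec f (by simpa [weightedInner_apply] using LinearMap.mem_ker.1 hf)
  have hsq : adjForm G wE (centeredIndicator wV A) (centeredIndicator wV B) ^ 2 ≤
      max |lam| |μ| ^ 2 * (weightedInner wV (centeredIndicator wV A) (centeredIndicator wV A) *
        weightedInner wV (centeredIndicator wV B) (centeredIndicator wV B)) :=
    LinearMap.BilinForm.apply_sq_le_of_forall_abs_apply_self_le
      ((adjForm_isSymm G wE).restrict S) ((weightedInner_isSymm wV).restrict S)
      (fun f => abs_le_max_abs_mul_of_le_of_le
        (weightedInner_self_nonneg (fun v => (hVpos v).le) _)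
        (hbounds f f.2).1 (hbounds f f.2).2) ⟨_, hcenter A⟩ ⟨_, hcenter B⟩
  obtain ⟨hlo, hhi⟩ := hbounds _ (hcenter A)
  simp only [weightedInner_centeredIndicator_self htot,
    adjForm_centeredIndicator G wE hsum hvert] at hsq hlo hhi
  refine ⟨?_, by linarith, by linarith⟩
  calc _ ≤ _ := Real.abs_le_sqrt hsq
    _ = _ := by
      rw [Real.sqrt_mul (sq_nonneg _), Real.sqrt_sq (le_max_of_le_left (abs_nonneg lam))]
      ring_nf

/-- Weighted Expander Mixing Lemma: if the adjacency operator of a weighted graph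
has all eigenvalues on the orthogonal complement of the constants in `[μ, lam]`,
then for vertex sets `A, B` with `α = w(A)`, `β = w(B)`:
(i) `|½ w(E_ord(A,B)) − αβ| ≤ max{|lam|,|μ|} √(αβ(1−α)(1−β))`, and
(ii) `μ α(1−α) ≤ w(E(A)) − α² ≤ lam α(1−α)` (with `w(E(A)) = ½ w(E_ord(A,A))`). -/
theorem stmt9 {V : Type*} [Fintype V] [DecidableEq V] (G : SimpleGraph V)
    [DecidableRel G.Adj]
    (wE : Sym2 V → ℝ) (wV : V → ℝ)
    (hEpos : ∀ e ∈ G.edgeSet, 0 < wE e) (hVpos : ∀ v : V, 0 < wV v)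
    (hsum : ∑ e ∈ G.edgeFinset, wE e = 1)
    (hvert : ∀ v : V, 2 * wV v = ∑ u ∈ G.neighborFinset v, wE s(v, u))
    (μ lam : ℝ)
    (hspec : ∀ f : V → ℝ, (∑ x, wV x * f x = 0) →
      μ * (∑ x, wV x * f x * f x) ≤ ∑ x, wV x * adjOp G wE wV f x * f x ∧
      ∑ x, wV x * adjOp G wE wV f x * f x ≤ lam * (∑ x, wV x * f x * f x))
    (A B : Finset V) :
    |(1 / 2) * (∑ u ∈ A, ∑ v ∈ B.filter (G.Adj u), wE s(u, v)) -
        (∑ v ∈ A, wV v) * (∑ v ∈ B, wV v)|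
      ≤ max |lam| |μ| *
        Real.sqrt ((∑ v ∈ A, wV v) * (∑ v ∈ B, wV v) *
          (1 - ∑ v ∈ A, wV v) * (1 - ∑ v ∈ B, wV v)) ∧
    μ * (∑ v ∈ A, wV v) * (1 - ∑ v ∈ A, wV v)
      ≤ (1 / 2) * (∑ u ∈ A, ∑ v ∈ A.filter (G.Adj u), wE s(u, v)) -
        (∑ v ∈ A, wV v) ^ 2 ∧
    (1 / 2) * (∑ u ∈ A, ∑ v ∈ A.filter (G.Adj u), wE s(u, v)) -
        (∑ v ∈ A, wV v) ^ 2
      ≤ lam * (∑ v ∈ A, wV v) * (1 - ∑ v ∈ A, wV v) :=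
  stmt9_general G wE wV hVpos hsum hvert μ lam hspec A B
end

section
/- The two-variable function h(x,y) = √(x y (1 − kx)(1 − ky)), for fixed integer k ≥ 1, is concave on the square [0, 1/k] × [0, 1/k]. -/
private lemma stmt13_aux (a u v s t : ℝ) (ha : 0 ≤ a) (ha1 : 0 ≤ 1 - a)
    (hu0 : 0 ≤ u) (hv0 : 0 ≤ v) (hs0 : 0 ≤ s) (ht0 : 0 ≤ t) :
    a * (u * v) + (1 - a) * (s * t)
      ≤ Real.sqrt ((a * u ^ 2 + (1 - a) * s ^ 2) * (a * v ^ 2 + (1 - a) * t ^ 2)) := by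
  have hX0 : 0 ≤ a * (u * v) + (1 - a) * (s * t) :=
    add_nonneg (mul_nonneg ha (mul_nonneg hu0 hv0)) (mul_nonneg ha1 (mul_nonneg hs0 ht0))
  have hA0 : 0 ≤ a * u ^ 2 + (1 - a) * s ^ 2 := by positivity
  have hB0 : 0 ≤ a * v ^ 2 + (1 - a) * t ^ 2 := by positivity
  rw [Real.le_sqrt hX0 (mul_nonneg hA0 hB0)]
  nlinarith [mul_nonneg (mul_nonneg ha ha1) (sq_nonneg (u * t - s * v))]

/-- For a fixed integer `k ≥ 1`, the function `h(x,y) = √(xy(1−kx)(1−ky))` is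
concave on the square `[0, 1/k] × [0, 1/k]`. -/
theorem stmt13 (k : ℕ) (hk : 1 ≤ k) :
    ConcaveOn ℝ (Set.Icc (0 : ℝ) (1 / k) ×ˢ Set.Icc (0 : ℝ) (1 / k))
      (fun p : ℝ × ℝ => Real.sqrt (p.1 * p.2 * (1 - k * p.1) * (1 - k * p.2))) := by
  have hk0 : (0:ℝ) < k := by exact_mod_cast Nat.pos_of_ne_zero (by omega)
  constructor
  · exact (convex_Icc _ _).prod (convex_Icc _ _)
  · intro p hp q hq a b ha hb hab
    obtain ⟨x1, y1⟩ := p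
    obtain ⟨x2, y2⟩ := q
    simp only [Set.mem_prod, Set.mem_Icc] at hp hq
    have hb' : b = 1 - a := by linarith
    subst hb'
    -- bounds
    have hkx1 : (k:ℝ) * x1 ≤ 1 := by
      have := hp.1.2; rw [le_div_iff₀ hk0] at this; linarith
    have hkx2 : (k:ℝ) * x2 ≤ 1 := by
      have := hq.1.2; rw [le_div_iff₀ hk0] at this; linarith
    have hky1 : (k:ℝ) * y1 ≤ 1 := by
      have := hp.2.2; rw [le_div_iff₀ hk0] at this; linarith
    have hky2 : (k:ℝ) * y2 ≤ 1 := by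
      have := hq.2.2; rw [le_div_iff₀ hk0] at this; linarith
    have hf1 : 0 ≤ x1 * (1 - k * x1) := mul_nonneg hp.1.1 (by linarith)
    have hg1 : 0 ≤ y1 * (1 - k * y1) := mul_nonneg hp.2.1 (by linarith)
    have hf2 : 0 ≤ x2 * (1 - k * x2) := mul_nonneg hq.1.1 (by linarith)
    have hg2 : 0 ≤ y2 * (1 - k * y2) := mul_nonneg hq.2.1 (by linarith)
    simp only [Prod.smul_mk, Prod.mk_add_mk, smul_eq_mul]
    set u := Real.sqrt (x1 * (1 - k * x1)) with hu
    set v := Real.sqrt (y1 * (1 - k * y1)) with hv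
    set s := Real.sqrt (x2 * (1 - k * x2)) with hs
    set t := Real.sqrt (y2 * (1 - k * y2)) with ht
    have hu0 : 0 ≤ u := Real.sqrt_nonneg _
    have hv0 : 0 ≤ v := Real.sqrt_nonneg _
    have hs0 : 0 ≤ s := Real.sqrt_nonneg _
    have ht0 : 0 ≤ t := Real.sqrt_nonneg _
    have hu2 : u ^ 2 = x1 * (1 - k * x1) := Real.sq_sqrt hf1
    have hv2 : v ^ 2 = y1 * (1 - k * y1) := Real.sq_sqrt hg1
    have hs2 : s ^ 2 = x2 * (1 - k * x2) := Real.sq_sqrt hf2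
    have ht2 : t ^ 2 = y2 * (1 - k * y2) := Real.sq_sqrt hg2
    have e1 : x1 * y1 * (1 - k * x1) * (1 - k * y1)
        = (x1 * (1 - k * x1)) * (y1 * (1 - k * y1)) := by ring
    have e2 : x2 * y2 * (1 - k * x2) * (1 - k * y2)
        = (x2 * (1 - k * x2)) * (y2 * (1 - k * y2)) := by ring
    have hA : a * u ^ 2 + (1 - a) * s ^ 2
        ≤ (a * x1 + (1 - a) * x2) * (1 - k * (a * x1 + (1 - a) * x2)) := by
      rw [hu2, hs2]
      nlinarith [mul_nonneg (mul_nonneg ha hb) (sq_nonneg (x1 - x2)), hk0.le]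
    have hB : a * v ^ 2 + (1 - a) * t ^ 2
        ≤ (a * y1 + (1 - a) * y2) * (1 - k * (a * y1 + (1 - a) * y2)) := by
      rw [hv2, ht2]
      nlinarith [mul_nonneg (mul_nonneg ha hb) (sq_nonneg (y1 - y2)), hk0.le]
    have ha1 : (0:ℝ) ≤ 1 - a := hb
    have hA0 : 0 ≤ a * u ^ 2 + (1 - a) * s ^ 2 :=
      add_nonneg (mul_nonneg ha (sq_nonneg u)) (mul_nonneg ha1 (sq_nonneg s))
    have hB0 : 0 ≤ a * v ^ 2 + (1 - a) * t ^ 2 :=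
      add_nonneg (mul_nonneg ha (sq_nonneg v)) (mul_nonneg ha1 (sq_nonneg t))
    have hX0 : 0 ≤ a * (u * v) + (1 - a) * (s * t) :=
      add_nonneg (mul_nonneg ha (mul_nonneg hu0 hv0))
        (mul_nonneg ha1 (mul_nonneg hs0 ht0))
    have key : a * (u * v) + (1 - a) * (s * t)
        ≤ Real.sqrt ((a * u ^ 2 + (1 - a) * s ^ 2) * (a * v ^ 2 + (1 - a) * t ^ 2)) :=
      stmt13_aux a u v s t ha ha1 hu0 hv0 hs0 ht0
    calc a * Real.sqrt (x1 * y1 * (1 - k * x1) * (1 - k * y1))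
          + (1 - a) * Real.sqrt (x2 * y2 * (1 - k * x2) * (1 - k * y2))
        = a * (u * v) + (1 - a) * (s * t) := by
          rw [e1, e2, Real.sqrt_mul hf1, Real.sqrt_mul hf2]
      _ ≤ Real.sqrt ((a * u ^ 2 + (1 - a) * s ^ 2) * (a * v ^ 2 + (1 - a) * t ^ 2)) := key
      _ ≤ Real.sqrt ((a * x1 + (1 - a) * x2) * (a * y1 + (1 - a) * y2)
            * (1 - k * (a * x1 + (1 - a) * x2)) * (1 - k * (a * y1 + (1 - a) * y2))) := by
          apply Real.sqrt_le_sqrt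
          calc (a * u ^ 2 + (1 - a) * s ^ 2) * (a * v ^ 2 + (1 - a) * t ^ 2)
              ≤ ((a * x1 + (1 - a) * x2) * (1 - k * (a * x1 + (1 - a) * x2)))
                * ((a * y1 + (1 - a) * y2) * (1 - k * (a * y1 + (1 - a) * y2))) := by
                apply mul_le_mul hA hB hB0 (le_trans hA0 hA)
            _ = _ := by ring
end

section
/- Let (X,w) be a weighted graph and R a nontrivial abelian group. Then the 0-dimensional coboundary expansion of X with coefficients in the constant augmented sheaf R satisfies cb₀(X,w,R) ≥ h′(X,w), where h′(X,w) = min over nonempty proper vertex subsets A of w(E(A, Aᶜ)) / (2 w(A) w(Aᶜ)). That is, for every function f : X(0) → R there exists a ∈ R such that w({e ∈ X(1) : f(e⁺) ≠ f(e⁻)}) ≥ h′(X,w) · w({v : f(v) ≠ a}). -/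
/-!
Let `a` be a value of `f` minimising the weight `D a` of `{v | f v ≠ a}`, and split the vertices
into the level sets `A b = {v | f v = b}`. The weight of the complement of `A b` is `D b ≥ D a`,
so the expansion hypothesis gives `2 h' w(A b) D a ≤ w(E(A b, (A b)ᶜ))`. Summing over `b`, the
vertex weights add up to `1` and the cuts add up to twice the weight of the edges on which `f`
is not constant.
-/

open SimpleGraph Finset
open scoped Classical

namespace SimpleGraph

variable {V : Type*} [Fintype V] [DecidableEq V] (G : SimpleGraph V) [DecidableRel G.Adj]
  {M : Type*} [AddCommMonoid M]

theorem sum_dart_eq_sum_neighborFinset (g : V → V → M) :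
    ∑ d : G.Dart, g d.fst d.snd = ∑ v, ∑ u ∈ G.neighborFinset v, g v u := by
  rw [← sum_fiberwise_of_maps_to (t := univ) (g := fun d : G.Dart => d.fst)
    (fun d _ => mem_univ d.fst)]
  refine sum_congr rfl fun v _ => ?_
  have hfiber : univ.filter (fun d : G.Dart => d.fst = v) = univ.image (G.dartOfNeighborSet v) := by
    simpa using G.dart_fst_fiber v
  rw [hfiber, sum_image fun _ _ _ _ h => G.dartOfNeighborSet_injective v h, neighborFinset_def,
    ← sum_set_coe]
  rfl

theorem sum_dart_edge (g : Sym2 V → M) :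
    ∑ d : G.Dart, g d.edge = 2 • ∑ e ∈ G.edgeFinset, g e := by
  rw [← sum_fiberwise_of_maps_to (t := G.edgeFinset) (g := Dart.edge)
    (fun d _ => mem_edgeFinset.2 d.edge_mem), smul_sum]
  refine sum_congr rfl fun e he => ?_
  rw [sum_congr rfl fun d hd => congrArg g (mem_filter.1 hd).2, sum_const,
    G.dart_edge_fiber_card e (mem_edgeFinset.1 he)]

theorem sum_sum_neighborFinset_eq_two_nsmul (g : Sym2 V → M) :
    ∑ v, ∑ u ∈ G.neighborFinset v, g s(v, u) = 2 • ∑ e ∈ G.edgeFinset, g e := by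
  rw [← G.sum_dart_eq_sum_neighborFinset fun v u => g s(v, u), ← sum_dart_edge]
  rfl

def cutWeight (wE : Sym2 V → ℝ) (A : Finset V) : ℝ :=
  ∑ u ∈ A, ∑ v ∈ G.neighborFinset u \ A, wE s(u, v)

theorem cutWeight_univ (wE : Sym2 V → ℝ) : G.cutWeight wE univ = 0 := by
  refine sum_eq_zero fun u _ => ?_
  rw [sdiff_eq_empty_iff_subset.2 (subset_univ _), sum_empty]

theorem sum_cutWeight_fiberwise {β : Type*} [DecidableEq β] (wE : Sym2 V → ℝ) (f : V → β)
    {t : Finset β} (ht : ∀ v, f v ∈ t) :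
    ∑ b ∈ t, G.cutWeight wE (univ.filter (f · = b))
      = ∑ u, ∑ v ∈ G.neighborFinset u, if f u ≠ f v then wE s(u, v) else 0 := by
  rw [← sum_fiberwise_of_maps_to (t := t) (g := f) fun v _ => ht v]
  refine sum_congr rfl fun b _ => sum_congr rfl fun u hu => ?_
  rw [← sum_filter]
  congr 1
  ext v
  simp [(mem_filter.1 hu).2, eq_comm]

end SimpleGraph

open SimpleGraph

theorem sum_vertexWeight_eq_one {V : Type*} [Fintype V] [DecidableEq V] {G : SimpleGraph V}
    [DecidableRel G.Adj] {wE : Sym2 V → ℝ} {wV : V → ℝ}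
    (hsum : ∑ e ∈ G.edgeFinset, wE e = 1)
    (hvert : ∀ v : V, 2 * wV v = ∑ u ∈ G.neighborFinset v, wE s(v, u)) :
    ∑ v, wV v = 1 := by
  have h := G.sum_sum_neighborFinset_eq_two_nsmul wE
  rw [← sum_congr rfl fun v _ => hvert v, ← mul_sum, hsum, two_nsmul] at h
  linarith

/-- Unlike the expansion hypothesis, this form also covers `A = ∅` and `A = univ`. -/
theorem mul_le_cutWeight_of_le_sum_compl {V : Type*} [Fintype V] [DecidableEq V]
    {G : SimpleGraph V} [DecidableRel G.Adj] {wE : Sym2 V → ℝ} {wV : V → ℝ} {h' d : ℝ}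
    (hV : ∀ v, 0 ≤ wV v) (hh'0 : 0 ≤ h')
    (hh' : ∀ A : Finset V, A.Nonempty → A ≠ univ →
      h' * (2 * (∑ v ∈ A, wV v) * (∑ v ∈ Aᶜ, wV v)) ≤ G.cutWeight wE A)
    (A : Finset V) (hd : d ≤ ∑ v ∈ Aᶜ, wV v) :
    h' * (2 * (∑ v ∈ A, wV v) * d) ≤ G.cutWeight wE A := by
  have hwA : 0 ≤ ∑ v ∈ A, wV v := sum_nonneg fun v _ => hV v
  obtain rfl | hne := A.eq_empty_or_nonempty
  · simp [cutWeight]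
  by_cases huniv : A = univ
  · subst huniv
    rw [G.cutWeight_univ]
    simp only [compl_univ, sum_empty] at hd
    exact mul_nonpos_of_nonneg_of_nonpos hh'0 (mul_nonpos_of_nonneg_of_nonpos (by positivity) hd)
  calc h' * (2 * (∑ v ∈ A, wV v) * d)
      ≤ h' * (2 * (∑ v ∈ A, wV v) * ∑ v ∈ Aᶜ, wV v) := by gcongr
    _ ≤ G.cutWeight wE A := hh' A hne huniv

theorem stmt14_general {V : Type*} [Fintype V] [DecidableEq V] (G : SimpleGraph V)
    [DecidableRel G.Adj]
    (wE : Sym2 V → ℝ) (wV : V → ℝ)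
    (hEpos : ∀ e ∈ G.edgeSet, 0 < wE e) (hVpos : ∀ v : V, 0 < wV v)
    (hsum : ∑ e ∈ G.edgeFinset, wE e = 1)
    (hvert : ∀ v : V, 2 * wV v = ∑ u ∈ G.neighborFinset v, wE s(v, u))
    (R : Type*) [AddCommGroup R]
    (h' : ℝ)
    (hh' : ∀ A : Finset V, A.Nonempty → A ≠ Finset.univ →
      h' * (2 * (∑ v ∈ A, wV v) * (∑ v ∈ Aᶜ, wV v))
        ≤ ∑ u ∈ A, ∑ v ∈ (G.neighborFinset u) \ A, wE s(u, v))
    (f : V → R) :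
    ∃ a : R,
      h' * (∑ v ∈ Finset.univ.filter (fun v => f v ≠ a), wV v)
        ≤ (1 / 2) * ∑ u, ∑ v ∈ G.neighborFinset u,
            (if f u ≠ f v then wE s(u, v) else 0) := by
  have hV v : 0 ≤ wV v := (hVpos v).le
  by_cases hh'0 : h' ≤ 0
  · refine ⟨0, (mul_nonpos_of_nonpos_of_nonneg hh'0 (sum_nonneg fun v _ => hV v)).trans ?_⟩
    refine mul_nonneg (by norm_num) (sum_nonneg fun u _ => sum_nonneg fun v hv => ?_)
    split_ifs
    exacts [(hEpos _ ((G.mem_neighborFinset u v).1 hv)).le, le_rfl]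
  set D : R → ℝ := fun b => ∑ v ∈ univ.filter (f · ≠ b), wV v
  set t := insert 0 (univ.image f)
  have ht v : f v ∈ t := mem_insert_of_mem (mem_image_of_mem f (mem_univ v))
  obtain ⟨a, -, ha⟩ := t.exists_min_image D (insert_nonempty _ _)
  refine ⟨a, ?_⟩
  have hfiber b (hb : b ∈ t) := mul_le_cutWeight_of_le_sum_compl hV (not_le.1 hh'0).le hh'
    (univ.filter (f · = b)) (d := D a) (by rw [compl_filter]; exact ha b hb)
  have htotal : ∑ b ∈ t, ∑ v ∈ univ.filter (f · = b), wV v = 1 := by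
    rw [sum_fiberwise_of_maps_to fun v _ => ht v, sum_vertexWeight_eq_one hsum hvert]
  calc h' * D a
      = (1 / 2) * ∑ b ∈ t, h' * (2 * (∑ v ∈ univ.filter (f · = b), wV v) * D a) := by
        rw [← mul_sum, ← sum_mul, ← mul_sum, htotal]
        ring
    _ ≤ (1 / 2) * ∑ b ∈ t, G.cutWeight wE (univ.filter (f · = b)) := by
        gcongr with b hb
        exact hfiber b hb
    _ = _ := by rw [G.sum_cutWeight_fiberwise wE f ht]

/-- `cb₀(X,w,R) ≥ h′(X,w)` for the constant augmented sheaf with coefficients in a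
nontrivial abelian group `R`: if `h'` satisfies
`w(E(A,Aᶜ)) ≥ h'·2·w(A)·w(Aᶜ)` for every nonempty proper vertex set `A`, then for
every `f : X(0) → R` there is `a ∈ R` with
`w({e : f(e⁺) ≠ f(e⁻)}) ≥ h' · w({v : f(v) ≠ a})`. -/
theorem stmt14 {V : Type*} [Fintype V] [DecidableEq V] (G : SimpleGraph V)
    [DecidableRel G.Adj]
    (wE : Sym2 V → ℝ) (wV : V → ℝ)
    (hEpos : ∀ e ∈ G.edgeSet, 0 < wE e) (hVpos : ∀ v : V, 0 < wV v)
    (hsum : ∑ e ∈ G.edgeFinset, wE e = 1)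
    (hvert : ∀ v : V, 2 * wV v = ∑ u ∈ G.neighborFinset v, wE s(v, u))
    (R : Type*) [AddCommGroup R] [Nontrivial R]
    (h' : ℝ)
    (hh' : ∀ A : Finset V, A.Nonempty → A ≠ Finset.univ →
      h' * (2 * (∑ v ∈ A, wV v) * (∑ v ∈ Aᶜ, wV v))
        ≤ ∑ u ∈ A, ∑ v ∈ (G.neighborFinset u) \ A, wE s(u, v))
    (f : V → R) :
    ∃ a : R,
      h' * (∑ v ∈ Finset.univ.filter (fun v => f v ≠ a), wV v)
        ≤ (1 / 2) * ∑ u, ∑ v ∈ G.neighborFinset u,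
            (if f u ≠ f v then wE s(u, v) else 0) :=
  stmt14_general G wE wV hEpos hVpos hsum hvert R h' hh' f
end

section
/- Let X be a cycle graph with vertices v₀,…,v_{ℓ−1} and edges e_i = {v_i, v_{(i+1) mod ℓ}}. Let R be an abelian group with subgroups R_{v_i} and R_{e_i} that are all linearly disjoint in R (the summation map from their direct sum to R is injective). Suppose g₀,…,g_{ℓ−1} ∈ R satisfy g_{(i+1) mod ℓ} − g_i ∈ R_{v_i} + R_{v_{(i+1) mod ℓ}} + R_{e_i} for all i. Then there exists h ∈ R such that g_i − h ∈ R_{v_i} for all i. -/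
open Finset

/-! Write `g (i+1) - g i = aᵢ + bᵢ + cᵢ` with `aᵢ ∈ Rvᵢ`, `bᵢ ∈ Rvᵢ₊₁`, `cᵢ ∈ Reᵢ`. Summing around
the cycle gives `∑ᵢ (aᵢ + bᵢ₋₁) + ∑ᵢ cᵢ = 0` with `aᵢ + bᵢ₋₁ ∈ Rvᵢ`, so linear disjointness
forces `cᵢ = 0` and `bᵢ = -aᵢ₊₁`. Then `g (i+1) + aᵢ₊₁ = g i + aᵢ`, i.e. `g + a` is constant
on the cycle, and its value `h` satisfies `g i - h = -aᵢ ∈ Rvᵢ`. -/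

namespace Fin

variable {n : ℕ} [NeZero n]

theorem apply_eq_apply_zero_of_apply_add_one {α : Type*} {f : Fin n → α}
    (hf : ∀ i, f (i + 1) = f i) (i : Fin n) : f i = f 0 := by
  obtain ⟨m, rfl⟩ : ∃ m, n = m + 1 := Nat.exists_eq_succ_of_ne_zero (NeZero.ne n)
  induction i using Fin.induction with
  | zero => rfl
  | succ i ih => rw [← coeSucc_eq_succ, hf, ih]

theorem sum_univ_sub_apply_add_one {G : Type*} [AddCommGroup G] (g : Fin n → G) :
    ∑ i, (g (i + 1) - g i) = 0 := by
  rw [sum_sub_distrib, sub_eq_zero]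
  exact Equiv.sum_comp (Equiv.addRight (1 : Fin n)) g

end Fin

theorem add_apply_add_one_eq_of_linearlyDisjoint {R : Type*} [AddCommGroup R] {n : ℕ} [NeZero n]
    {Rv Re : Fin n → AddSubgroup R}
    (hdisj : ∀ (c d : Fin n → R), (∀ i, c i ∈ Rv i) → (∀ i, d i ∈ Re i) →
      (∑ i, c i) + (∑ i, d i) = 0 → (∀ i, c i = 0) ∧ (∀ i, d i = 0))
    {g a b c : Fin n → R} (ha : ∀ i, a i ∈ Rv i) (hb : ∀ i, b i ∈ Rv (i + 1))
    (hc : ∀ i, c i ∈ Re i) (habc : ∀ i, g (i + 1) - g i = a i + b i + c i) (i : Fin n) :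
    g (i + 1) + a (i + 1) = g i + a i := by
  have hmem : ∀ i, a i + b (i - 1) ∈ Rv i := fun i =>
    (Rv i).add_mem (ha i) (by simpa using hb (i - 1))
  have hshift : ∑ i, b (i - 1) = ∑ i, b i := Equiv.sum_comp (Equiv.subRight (1 : Fin n)) b
  have hsum : ∑ i, (a i + b (i - 1)) + ∑ i, c i = 0 := by
    calc ∑ i, (a i + b (i - 1)) + ∑ i, c i
        = ∑ i, (a i + b i + c i) := by
          rw [sum_add_distrib, hshift, sum_add_distrib, sum_add_distrib]
      _ = 0 := by simp_rw [← habc, Fin.sum_univ_sub_apply_add_one]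
  obtain ⟨hab, hc0⟩ := hdisj _ _ hmem hc hsum
  have hb' : b i = -a (i + 1) := eq_neg_of_add_eq_zero_right (by simpa using hab (i + 1))
  have := habc i
  rw [hb', hc0, add_zero, sub_eq_iff_eq_add] at this
  rw [this]
  abel

theorem stmt17_general (R : Type*) [AddCommGroup R] (ℓ : ℕ) [NeZero ℓ]
    (Rv Re : Fin ℓ → AddSubgroup R)
    (hdisj : ∀ (c d : Fin ℓ → R), (∀ i, c i ∈ Rv i) → (∀ i, d i ∈ Re i) →
      (∑ i, c i) + (∑ i, d i) = 0 → (∀ i, c i = 0) ∧ (∀ i, d i = 0))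
    (g : Fin ℓ → R)
    (hg : ∀ i : Fin ℓ, ∃ a ∈ Rv i, ∃ b ∈ Rv (i + 1), ∃ c ∈ Re i,
      g (i + 1) - g i = a + b + c) :
    ∃ h : R, ∀ i, g i - h ∈ Rv i := by
  choose a ha b hb c hc habc using hg
  have hconst : ∀ i, g i + a i = g 0 + a 0 :=
    Fin.apply_eq_apply_zero_of_apply_add_one
      (add_apply_add_one_eq_of_linearlyDisjoint hdisj ha hb hc habc)
  refine ⟨g 0 + a 0, fun i => ?_⟩
  rw [← hconst i, sub_add_cancel_left]
  exact (Rv i).neg_mem (ha i)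

/-- On a cycle of length `ℓ ≥ 3` with linearly disjoint subgroups `Rv i` (at the
vertices) and `Re i` (at the edges `{vᵢ, vᵢ₊₁}`) of an abelian group `R`: if
`g : Fin ℓ → R` satisfies `g(i+1) − g(i) ∈ Rvᵢ + Rvᵢ₊₁ + Reᵢ` for every `i`
(indices mod `ℓ`), then there exists `h ∈ R` with `g(i) − h ∈ Rvᵢ` for all `i`. -/
theorem stmt17 (R : Type*) [AddCommGroup R] (ℓ : ℕ) [NeZero ℓ] (hℓ : 3 ≤ ℓ)
    (Rv Re : Fin ℓ → AddSubgroup R)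
    (hdisj : ∀ (c d : Fin ℓ → R), (∀ i, c i ∈ Rv i) → (∀ i, d i ∈ Re i) →
      (∑ i, c i) + (∑ i, d i) = 0 → (∀ i, c i = 0) ∧ (∀ i, d i = 0))
    (g : Fin ℓ → R)
    (hg : ∀ i : Fin ℓ, ∃ a ∈ Rv i, ∃ b ∈ Rv (i + 1), ∃ c ∈ Re i,
      g (i + 1) - g i = a + b + c) :
    ∃ h : R, ∀ i, g i - h ∈ Rv i :=
  stmt17_general R ℓ Rv Re hdisj g hg
end

section
/- Let X be a pure r-dimensional finite simplicial complex that is q-thick (every (r−1)-face is contained in at least q r-faces), equipped with its canonical weight function w (uniform on r-faces, extended downward by averaging). Then for every edge e and vertex x ∈ e, one has w(e)/w(x) ≤ 2/(q + r − 1). Equivalently, |X(r)_{⊇e}| / |X(r)_{⊇x}| ≤ r/(q + r − 1). -/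
/-!
Double count the pairs `z ⊂ y` with `z` a face of size `r` and `y` a face of size `r + 1`, both
containing the vertex `x`. Every such `y` contains exactly `r` such `z`, so there are `r |X(r)_{⊇x}|`
pairs. Let `e = x ∪ {v}`. The pairs with `v ∈ z` are the pairs over `e`, and there are `(r - 1)`
of them for each `y ⊇ e`. The faces `z ∌ v` include all `y \ {v}` with `y ⊇ e`, and by thickness each
lies in at least `q` faces `y`. Hence `(r - 1 + q) |X(r)_{⊇e}| ≤ r |X(r)_{⊇x}|`.
-/

open Finset

namespace SimplicialComplex

variable {α : Type*} [DecidableEq α] {X : Finset (Finset α)}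

/-- `X(r)_{⊇s}` is `facesAbove X (r + 1) s`: `n` counts vertices, not dimension. -/
def facesAbove (X : Finset (Finset α)) (n : ℕ) (s : Finset α) : Finset (Finset α) :=
  X.filter fun y => y.card = n ∧ s ⊆ y

theorem mem_facesAbove {n : ℕ} {s y : Finset α} :
    y ∈ facesAbove X n s ↔ y ∈ X ∧ y.card = n ∧ s ⊆ y :=
  mem_filter

theorem filter_mem_facesAbove (n : ℕ) (s : Finset α) (v : α) :
    (facesAbove X n s).filter (v ∈ ·) = facesAbove X n (insert v s) := by
  ext y
  simp only [mem_filter, mem_facesAbove, insert_subset_iff]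
  tauto

variable (hdown : ∀ y ∈ X, ∀ z ⊆ y, z ∈ X)
include hdown

theorem filter_subset_facesAbove_eq_image_erase {n : ℕ} {s y : Finset α} (hy : y ∈ X)
    (hcard : y.card = n + 1) (hsy : s ⊆ y) :
    (facesAbove X n s).filter (· ⊆ y) = (y \ s).image y.erase := by
  ext w
  simp only [mem_filter, mem_facesAbove, mem_image, mem_sdiff]
  constructor
  · rintro ⟨⟨-, hw, hsw⟩, hwy⟩
    obtain ⟨u, hu⟩ : ∃ u, y \ w = {u} := card_eq_one.mp (by rw [card_sdiff_of_subset hwy]; omega)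
    have hu' : u ∈ y \ w := hu ▸ mem_singleton_self u
    refine ⟨u, ⟨(mem_sdiff.mp hu').1, fun hus => (mem_sdiff.mp hu').2 (hsw hus)⟩, ?_⟩
    rw [erase_eq, ← hu, Finset.sdiff_sdiff_eq_self hwy]
  · rintro ⟨u, ⟨huy, hus⟩, rfl⟩
    refine ⟨⟨hdown y hy _ (erase_subset u y), ?_, subset_erase.mpr ⟨hsy, hus⟩⟩, erase_subset u y⟩
    rw [card_erase_of_mem huy, hcard, Nat.add_sub_cancel]

theorem card_filter_subset_facesAbove {n : ℕ} {s y : Finset α} (hy : y ∈ X)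
    (hcard : y.card = n + 1) (hsy : s ⊆ y) :
    ((facesAbove X n s).filter (· ⊆ y)).card = n + 1 - s.card := by
  rw [filter_subset_facesAbove_eq_image_erase hdown hy hcard hsy,
    card_image_of_injOn fun a ha b hb hab => (erase_inj y (mem_sdiff.mp ha).1).mp hab,
    card_sdiff_of_subset hsy, hcard]

theorem sum_card_facesAbove_succ (n : ℕ) (s : Finset α) :
    ∑ z ∈ facesAbove X n s, (facesAbove X (n + 1) z).card =
      (facesAbove X (n + 1) s).card * (n + 1 - s.card) := by
  have hbelow : ∀ z ∈ facesAbove X n s,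
      facesAbove X (n + 1) z = (facesAbove X (n + 1) s).bipartiteAbove (· ⊆ ·) z := by
    intro z hz
    ext y
    simp only [bipartiteAbove, mem_filter, mem_facesAbove]
    have hsz := (mem_facesAbove.mp hz).2.2
    exact ⟨fun ⟨hy, hc, hzy⟩ => ⟨⟨hy, hc, hsz.trans hzy⟩, hzy⟩, fun ⟨⟨hy, hc, _⟩, hzy⟩ => ⟨hy, hc, hzy⟩⟩
  rw [sum_congr rfl fun z hz => congrArg card (hbelow z hz),
    sum_card_bipartiteAbove_eq_sum_card_bipartiteBelow, sum_const_nat]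
  intro y hy
  obtain ⟨hyX, hcard, hsy⟩ := mem_facesAbove.mp hy
  exact card_filter_subset_facesAbove hdown hyX hcard hsy

theorem card_facesAbove_insert_le_card_filter_notMem {n : ℕ} {s : Finset α} {v : α}
    (hv : v ∉ s) :
    (facesAbove X (n + 1) (insert v s)).card ≤ ((facesAbove X n s).filter (v ∉ ·)).card := by
  refine card_le_card_of_injOn (·.erase v) (fun y hy => ?_) fun y hy y' hy' hyy' => ?_
  · obtain ⟨hyX, hcard, hvs⟩ := mem_facesAbove.mp hy
    obtain ⟨hvy, hsy⟩ := insert_subset_iff.mp hvs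
    simp only [mem_coe, mem_filter, mem_facesAbove, notMem_erase, not_false_eq_true, and_true]
    exact ⟨hdown y hyX _ (erase_subset v y), by rw [card_erase_of_mem hvy, hcard, Nat.add_sub_cancel],
      subset_erase.mpr ⟨hsy, hv⟩⟩
  · have hvy := insert_subset_iff.mp (mem_facesAbove.mp hy).2.2
    have hvy' := insert_subset_iff.mp (mem_facesAbove.mp hy').2.2
    rw [← insert_erase hvy.1, ← insert_erase hvy'.1]
    exact congrArg (insert v) hyy'

theorem card_facesAbove_insert_mul_add_le {n q : ℕ} {s : Finset α} {v : α} (hv : v ∉ s)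
    (hthick : ∀ z ∈ X, z.card = n → q ≤ (facesAbove X (n + 1) z).card) :
    (facesAbove X (n + 1) (insert v s)).card * (n + 1 - (s.card + 1)) +
        q * (facesAbove X (n + 1) (insert v s)).card ≤
      (facesAbove X (n + 1) s).card * (n + 1 - s.card) := by
  set A := facesAbove X (n + 1) (insert v s)
  have hinsert : ∑ z ∈ (facesAbove X n s).filter (v ∈ ·), (facesAbove X (n + 1) z).card =
      A.card * (n + 1 - (s.card + 1)) := by
    rw [filter_mem_facesAbove, sum_card_facesAbove_succ hdown, card_insert_of_notMem hv]
  have hmissing : q * A.card ≤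
      ∑ z ∈ (facesAbove X n s).filter (v ∉ ·), (facesAbove X (n + 1) z).card :=
    calc q * A.card ≤ q * ((facesAbove X n s).filter (v ∉ ·)).card :=
          Nat.mul_le_mul_left q (card_facesAbove_insert_le_card_filter_notMem hdown hv)
      _ ≤ _ := by
          rw [mul_comm, ← smul_eq_mul, ← sum_const]
          refine sum_le_sum fun z hz => ?_
          obtain ⟨hzX, hcard, -⟩ := mem_facesAbove.mp (mem_filter.mp hz).1
          exact hthick z hzX hcard
  rw [← sum_card_facesAbove_succ hdown, ← sum_filter_add_sum_filter_not _ (v ∈ ·), hinsert]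
  exact Nat.add_le_add_left hmissing _

end SimplicialComplex

theorem cast_mul_add_sub_one_le {r q A B : ℕ} (h : A * (r - 1) + q * A ≤ B * r) :
    (A : ℝ) * ((q : ℝ) + r - 1) ≤ (r : ℝ) * B := by
  have hr : (r : ℝ) ≤ ((r - 1 : ℕ) : ℝ) + 1 := by exact_mod_cast (by omega : r ≤ r - 1 + 1)
  have h' : (A : ℝ) * ((r - 1 : ℕ) : ℝ) + q * A ≤ B * r := by exact_mod_cast h
  nlinarith [(Nat.cast_nonneg A : (0 : ℝ) ≤ A)]

theorem canonical_weight_ratio_le {r q E B T : ℕ}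
    (h : (E : ℝ) * ((q : ℝ) + r - 1) ≤ (r : ℝ) * B) :
    (((r + 1).choose 2 : ℝ)⁻¹ * (E : ℝ) / (T : ℝ)) * ((q : ℝ) + r - 1)
      ≤ 2 * (((r + 1).choose 1 : ℝ)⁻¹ * (B : ℝ) / (T : ℝ)) := by
  rcases Nat.eq_zero_or_pos r with rfl | hr
  · simp only [zero_add, Nat.choose_succ_self, Nat.cast_zero, inv_zero, zero_mul, zero_div]
    positivity
  have hr' : (r : ℝ) ≠ 0 := by positivity
  calc (((r + 1).choose 2 : ℝ)⁻¹ * E / T) * ((q : ℝ) + r - 1)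
      = 2 / ((r + 1) * r) * (E * ((q : ℝ) + r - 1)) / T := by
        rw [Nat.cast_choose_two]; push_cast; rw [add_sub_cancel_right]; field_simp
    _ ≤ 2 / ((r + 1) * r) * (r * B) / T := by gcongr
    _ = 2 * (((r + 1).choose 1 : ℝ)⁻¹ * B / T) := by
        rw [Nat.choose_one_right]; push_cast; field_simp

theorem stmt18_general {V : Type*} [DecidableEq V] (r q : ℕ)
    (X : Finset (Finset V))
    (hdown : ∀ x ∈ X, ∀ y ⊆ x, y ∈ X)
    (hthick : ∀ x ∈ X, x.card = r →
      q ≤ (X.filter (fun y => y.card = r + 1 ∧ x ⊆ y)).card)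
    (e : Finset V) (hecard : e.card = 2)
    (x : Finset V) (hx : x ⊆ e) (hxcard : x.card = 1) :
    ((X.filter (fun y => y.card = r + 1 ∧ e ⊆ y)).card : ℝ) * ((q : ℝ) + r - 1)
      ≤ (r : ℝ) * ((X.filter (fun y => y.card = r + 1 ∧ x ⊆ y)).card : ℝ) ∧
    (((r + 1).choose 2 : ℝ)⁻¹ *
        ((X.filter (fun y => y.card = r + 1 ∧ e ⊆ y)).card : ℝ) /
        ((X.filter (fun y => y.card = r + 1)).card : ℝ)) * ((q : ℝ) + r - 1)
      ≤ 2 * (((r + 1).choose 1 : ℝ)⁻¹ *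
        ((X.filter (fun y => y.card = r + 1 ∧ x ⊆ y)).card : ℝ) /
        ((X.filter (fun y => y.card = r + 1)).card : ℝ)) := by
  obtain ⟨v, hv⟩ : ∃ v, e \ x = {v} := card_eq_one.mp (by rw [card_sdiff_of_subset hx]; omega)
  have hvx : v ∉ x := (mem_sdiff.mp (hv ▸ mem_singleton_self v)).2
  have he : e = insert v x := by rw [← sdiff_union_of_subset hx, hv, singleton_union]
  subst he
  have key := SimplicialComplex.card_facesAbove_insert_mul_add_le hdown hvx hthick
  rw [hxcard, Nat.add_sub_add_right, Nat.add_sub_cancel] at key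
  have hedge := cast_mul_add_sub_one_le key
  exact ⟨hedge, canonical_weight_ratio_le hedge⟩

/-- Let `X` be a pure `r`-dimensional finite simplicial complex that is `q`-thick
(every `(r−1)`-face, i.e. face with `r` vertices, lies in at least `q` faces with
`r+1` vertices), with its canonical weight function
`w(z) = C(r+1, |z|)⁻¹ · |X(r)_{⊇z}| / |X(r)|`. Then for every edge `e` and vertex
face `x ⊆ e`, `w(e)/w(x) ≤ 2/(q+r−1)`; equivalently
`|X(r)_{⊇e}| / |X(r)_{⊇x}| ≤ r/(q+r−1)`. -/
theorem stmt18 {V : Type*} [Fintype V] [DecidableEq V] (r q : ℕ) (hr : 1 ≤ r)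
    (X : Finset (Finset V))
    (hdown : ∀ x ∈ X, ∀ y ⊆ x, y ∈ X)
    (hpure : ∀ x ∈ X, ∃ y ∈ X, x ⊆ y ∧ y.card = r + 1)
    (htop : ∀ y ∈ X, y.card ≤ r + 1)
    (hthick : ∀ x ∈ X, x.card = r →
      q ≤ (X.filter (fun y => y.card = r + 1 ∧ x ⊆ y)).card)
    (e : Finset V) (he : e ∈ X) (hecard : e.card = 2)
    (x : Finset V) (hx : x ⊆ e) (hxcard : x.card = 1) :
    ((X.filter (fun y => y.card = r + 1 ∧ e ⊆ y)).card : ℝ) * ((q : ℝ) + r - 1)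
      ≤ (r : ℝ) * ((X.filter (fun y => y.card = r + 1 ∧ x ⊆ y)).card : ℝ) ∧
    (((r + 1).choose 2 : ℝ)⁻¹ *
        ((X.filter (fun y => y.card = r + 1 ∧ e ⊆ y)).card : ℝ) /
        ((X.filter (fun y => y.card = r + 1)).card : ℝ)) * ((q : ℝ) + r - 1)
      ≤ 2 * (((r + 1).choose 1 : ℝ)⁻¹ *
        ((X.filter (fun y => y.card = r + 1 ∧ x ⊆ y)).card : ℝ) /
        ((X.filter (fun y => y.card = r + 1)).card : ℝ)) :=
  stmt18_general r q X hdown hthick e hecard x hx hxcard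
end
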